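/- Rollout bound under a Lyapunov drift condition: under the hypotheses of the rollout performance bound (V* = T V* bounded with V*(t)=0, ‖V − V*‖∞ ≤ ε, π_R the rollout policy for V, proper from x), if in addition there exist L : X → [0,∞) and c > 0 such that E[ L(F(x', π_R(x'), w)) ] ≤ L(x') − c for every nonterminal state x' visited by the closed loop, then J^{π_R}(x) − V*(x) ≤ (2ε/c) · L(x). -/

import Mathlib

open MeasureTheory ProbabilityTheory Filter
open scoped ENNReal

open Classical in
/-- Bellman operator of the SSP: `(T V)(x) = inf_{u ∈ U(x)} ( f(x,u) + ∫ V(F(x,u,w)) dμ(w) )`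
for nonterminal `x`, and `(T V)(t) = 0`. -/
noncomputable def bellman {X U W : Type*} [MeasurableSpace W] (μ : Measure W)
    (t : X) (Ua : X → Set U) (f : X → U → ℝ) (F : X → U → W → X)
    (V : X → ℝ) (x : X) : ℝ :=
  if x = t then 0 else ⨅ u : Ua x, (f x (u : U) + ∫ w, V (F x (u : U) w) ∂μ)

/-- Closed-loop trajectory driven by a disturbance sequence `ω : ℕ → W`:
`x₀ = x`, `x_{k+1} = F(x_k, π(x_k), ω_k)`. -/
def traj {X U W : Type*} (F : X → U → W → X) (π : X → U) (x : X) (ω : ℕ → W) : ℕ → X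
  | 0 => x
  | k + 1 => F (traj F π x ω k) (π (traj F π x ω k)) (ω k)

/-- The trajectory as a family of random variables on an abstract sample space `Ω`,
given the disturbance random variables `ξ k : Ω → W`. -/
def trajOn {X U W Ω : Type*} (F : X → U → W → X) (π : X → U) (x : X)
    (ξ : ℕ → Ω → W) (k : ℕ) (ω : Ω) : X :=
  traj F π x (fun i => ξ i ω) k

/-- Hitting time `τ = inf { k ≥ 0 : x_k = t }` of the terminal state (`∞` if never reached),
valued in `ℝ≥0∞`. -/
noncomputable def hitTime {X Ω : Type*} (t : X) (Y : ℕ → Ω → X) (ω : Ω) : ℝ≥0∞ :=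
  ⨅ (k : ℕ) (_ : Y k ω = t), (k : ℝ≥0∞)

/-- Total expected cost `J = E[ Σ_{k=0}^{τ-1} f(x_k, π(x_k)) ]` (in `ℝ≥0∞`; the stage cost
is nonnegative). -/
noncomputable def totalCost {X U Ω : Type*} [MeasurableSpace Ω] (P : Measure Ω)
    (t : X) (f : X → U → ℝ) (π : X → U) (Y : ℕ → Ω → X) : ℝ≥0∞ :=
  ∫⁻ ω, ∑' (k : ℕ), (if (k : ℝ≥0∞) < hitTime t Y ω
    then ENNReal.ofReal (f (Y k ω) (π (Y k ω))) else 0) ∂P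

/-- Expected hitting time `E[τ]` (in `ℝ≥0∞`). -/
noncomputable def expHit {X Ω : Type*} [MeasurableSpace Ω] (P : Measure Ω)
    (t : X) (Y : ℕ → Ω → X) : ℝ≥0∞ :=
  ∫⁻ ω, hitTime t Y ω ∂P

/-!
Off the terminal state, the greedy choice and `‖V - V*‖∞ ≤ ε` give the one-step inequality
`f(y, π_R y) + E V*(F(y, π_R y, w)) ≤ V*(y) + 2ε`. Taking expectations along the closed loop
(`x_k` is independent of `w_k`) and telescoping,
`E[Σ_{k<n} f(x_k, π_R x_k)] + E V*(x_n) ≤ V*(x) + 2ε Σ_{k<n} P(x_k ≠ t)`.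
The drift condition telescopes in the same way to `c Σ_k P(x_k ≠ t) ≤ L(x)`. Hence
`P(x_n ≠ t) → 0`, so `E V*(x_n) → 0` because `V*` is bounded and vanishes at `t`, and
letting `n → ∞` gives the bound.
-/

open Finset Function
open scoped Topology

theorem add_sum_range_le_of_succ_add_le {α : Type*} [AddCommMonoid α] [PartialOrder α]
    [IsOrderedAddMonoid α] {a b d : ℕ → α} (h : ∀ k, a (k + 1) + b k ≤ a k + d k) (n : ℕ) :
    a n + ∑ k ∈ range n, b k ≤ a 0 + ∑ k ∈ range n, d k := by
  induction n with
  | zero => simp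
  | succ n ih =>
    calc a (n + 1) + ∑ k ∈ range (n + 1), b k
        = (a (n + 1) + b n) + ∑ k ∈ range n, b k := by rw [sum_range_succ]; abel
      _ ≤ (a n + d n) + ∑ k ∈ range n, b k := add_le_add_left (h n) _
      _ = (a n + ∑ k ∈ range n, b k) + d n := add_right_comm _ _ _
      _ ≤ (a 0 + ∑ k ∈ range n, d k) + d n := add_le_add_left ih _
      _ = a 0 + ∑ k ∈ range (n + 1), d k := by rw [sum_range_succ, add_assoc]

theorem summable_and_tsum_le_of_succ_add_le {a e q : ℕ → ℝ} {δ C M : ℝ} (he : ∀ k, 0 ≤ e k)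
    (hq : ∀ k, 0 ≤ q k) (hδ : 0 ≤ δ) (hC : 0 ≤ C) (hstep : ∀ k, a (k + 1) + e k ≤ a k + δ * q k)
    (ha : ∀ n, -(C * q n) ≤ a n) (hM : ∀ n, ∑ k ∈ range n, q k ≤ M) :
    Summable e ∧ ∑' k, e k ≤ a 0 + δ * M := by
  have hpartial : ∀ n, ∑ k ∈ range n, e k ≤ a 0 + δ * M + C * q n := fun n => by
    have htel := add_sum_range_le_of_succ_add_le hstep n
    rw [← mul_sum] at htel
    linarith [ha n, mul_le_mul_of_nonneg_left (hM n) hδ]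
  have hqM : ∀ n, q n ≤ M := fun n =>
    (single_le_sum (fun k _ => hq k) (self_mem_range_succ n)).trans (hM (n + 1))
  have hsummable : Summable e := summable_of_sum_range_le he fun n =>
    (hpartial n).trans (add_le_add_right (mul_le_mul_of_nonneg_left (hqM n) hC) _)
  have hlim : Tendsto (fun n => a 0 + δ * M + C * q n) atTop (𝓝 (a 0 + δ * M + C * 0)) :=
    tendsto_const_nhds.add ((summable_of_sum_range_le hq hM).tendsto_atTop_zero.const_mul C)
  refine ⟨hsummable, ?_⟩
  simpa using le_of_tendsto_of_tendsto' hsummable.hasSum.tendsto_sum_nat hlim hpartial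

theorem abs_integral_le_of_abs_le {W : Type*} [MeasurableSpace W] {μ : Measure W}
    [IsProbabilityMeasure μ] {g : W → ℝ} {C : ℝ} (hgC : ∀ w, |g w| ≤ C) : |∫ w, g w ∂μ| ≤ C := by
  simpa using norm_integral_le_of_norm_le_const (μ := μ)
    (.of_forall fun w => (Real.norm_eq_abs _).trans_le (hgC w))

theorem integrable_comp_of_abs_le {Ω X : Type*} [MeasurableSpace Ω] [MeasurableSpace X]
    {P : Measure Ω} [IsFiniteMeasure P] {Z : Ω → X} (hZ : Measurable Z) {g : X → ℝ}
    (hg : Measurable g) {B : ℝ} (hgB : ∀ y, |g y| ≤ B) : Integrable (fun ω => g (Z ω)) P :=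
  .of_bound (hg.comp hZ).aestronglyMeasurable B (.of_forall fun ω => hgB (Z ω))

theorem neg_mul_measureReal_le_integral_comp {Ω X : Type*} [MeasurableSpace Ω]
    [MeasurableSpace X] [MeasurableSingletonClass X] {P : Measure Ω} [IsFiniteMeasure P]
    {Z : Ω → X} (hZ : Measurable Z) {g : X → ℝ} (hg : Measurable g) {C : ℝ}
    (hgC : ∀ y, |g y| ≤ C) {t : X} (hgt : g t = 0) :
    -(C * P.real (Z ⁻¹' {t}ᶜ)) ≤ ∫ ω, g (Z ω) ∂P := by
  have hnt : MeasurableSet (Z ⁻¹' {t}ᶜ) := hZ (measurableSet_singleton t).compl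
  rw [mul_comm, ← smul_eq_mul, ← integral_indicator_const C hnt, ← integral_neg]
  refine integral_mono ((integrable_const C).indicator hnt).neg
    (integrable_comp_of_abs_le hZ hg hgC) fun ω => ?_
  by_cases h : Z ω = t
  · simp [h, hgt]
  · rw [Set.indicator_of_mem (show ω ∈ Z ⁻¹' {t}ᶜ from h)]
    exact (abs_le.mp (hgC _)).1

section Independence

variable {Ω α β : Type*} [MeasurableSpace Ω] [MeasurableSpace α] [MeasurableSpace β]
  {P : Measure Ω} [IsFiniteMeasure P] {Z : Ω → α} {ξ : Ω → β}

theorem ProbabilityTheory.IndepFun.lintegral_comp_eq_lintegral_lintegral (hind : IndepFun Z ξ P)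
    (hZ : Measurable Z) (hξ : Measurable ξ) {φ : α → β → ℝ≥0∞} (hφ : Measurable (uncurry φ)) :
    ∫⁻ ω, φ (Z ω) (ξ ω) ∂P = ∫⁻ ω, ∫⁻ b, φ (Z ω) b ∂(P.map ξ) ∂P := by
  have hlaw := (indepFun_iff_map_prod_eq_prod_map_map hZ.aemeasurable hξ.aemeasurable).mp hind
  calc ∫⁻ ω, φ (Z ω) (ξ ω) ∂P = ∫⁻ p, uncurry φ p ∂(P.map fun ω => (Z ω, ξ ω)) :=
        (lintegral_map hφ (hZ.prodMk hξ)).symm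
    _ = ∫⁻ a, ∫⁻ b, φ a b ∂(P.map ξ) ∂(P.map Z) := by
        rw [hlaw, lintegral_prod _ hφ.aemeasurable]; rfl
    _ = ∫⁻ ω, ∫⁻ b, φ (Z ω) b ∂(P.map ξ) ∂P := lintegral_map hφ.lintegral_prod_right' hZ

theorem ProbabilityTheory.IndepFun.integral_comp_eq_integral_integral (hind : IndepFun Z ξ P)
    (hZ : Measurable Z) (hξ : Measurable ξ) {φ : α → β → ℝ} (hφ : Measurable (uncurry φ))
    {C : ℝ} (hφC : ∀ a b, |φ a b| ≤ C) :
    ∫ ω, φ (Z ω) (ξ ω) ∂P = ∫ ω, ∫ b, φ (Z ω) b ∂(P.map ξ) ∂P := by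
  have hlaw := (indepFun_iff_map_prod_eq_prod_map_map hZ.aemeasurable hξ.aemeasurable).mp hind
  have hint : Integrable (uncurry φ) ((P.map Z).prod (P.map ξ)) :=
    .of_bound hφ.aestronglyMeasurable C (.of_forall fun p => hφC p.1 p.2)
  calc ∫ ω, φ (Z ω) (ξ ω) ∂P = ∫ p, uncurry φ p ∂(P.map fun ω => (Z ω, ξ ω)) :=
        (integral_map (hZ.prodMk hξ).aemeasurable hφ.aestronglyMeasurable).symm
    _ = ∫ a, ∫ b, φ a b ∂(P.map ξ) ∂(P.map Z) := by rw [hlaw, integral_prod _ hint]; rfl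
    _ = ∫ ω, ∫ b, φ (Z ω) b ∂(P.map ξ) ∂P :=
        integral_map hZ.aemeasurable hφ.stronglyMeasurable.integral_prod_right'.aestronglyMeasurable

end Independence

section Trajectory

variable {X U W Ω : Type*} {F : X → U → W → X} {π : X → U} {x : X}

theorem traj_congr {ω ω' : ℕ → W} {k : ℕ} (h : ∀ i < k, ω i = ω' i) :
    traj F π x ω k = traj F π x ω' k := by
  induction k with
  | zero => rfl
  | succ k ih =>
    simp only [traj, ih fun i hi => h i (by omega), h k k.lt_succ_self]

theorem trajOn_succ_eq_of_eq {ξ : ℕ → Ω → W} {t : X} (habs : ∀ w, F t (π t) w = t) {k : ℕ} {ω : Ω}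
    (h : trajOn F π x ξ k ω = t) : trajOn F π x ξ (k + 1) ω = t := by
  rw [show trajOn F π x ξ (k + 1) ω = F (trajOn F π x ξ k ω) (π (trajOn F π x ξ k ω)) (ξ k ω)
    from rfl, h, habs]

variable [MeasurableSpace X] [MeasurableSpace U] [MeasurableSpace W] [MeasurableSpace Ω]

theorem measurable_traj (hF : Measurable fun p : X × U × W => F p.1 p.2.1 p.2.2)
    (hπ : Measurable π) (k : ℕ) : Measurable fun ω : ℕ → W => traj F π x ω k := by
  induction k with
  | zero => exact measurable_const
  | succ k ih => exact hF.comp (ih.prodMk ((hπ.comp ih).prodMk (measurable_pi_apply k)))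

theorem measurable_uncurry_closedLoop (hF : Measurable fun p : X × U × W => F p.1 p.2.1 p.2.2)
    (hπ : Measurable π) : Measurable (uncurry fun y w => F y (π y) w) :=
  hF.comp (measurable_fst.prodMk ((hπ.comp measurable_fst).prodMk measurable_snd))

variable {P : Measure Ω} {ξ : ℕ → Ω → W}

theorem measurable_trajOn (hF : Measurable fun p : X × U × W => F p.1 p.2.1 p.2.2)
    (hπ : Measurable π) (hξ : ∀ k, Measurable (ξ k)) (k : ℕ) :
    Measurable (trajOn F π x ξ k) :=
  (measurable_traj hF hπ k).comp (measurable_pi_lambda _ hξ)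

theorem indepFun_trajOn [Nonempty W] (hF : Measurable fun p : X × U × W => F p.1 p.2.1 p.2.2)
    (hπ : Measurable π) (hξ : ∀ k, Measurable (ξ k)) (hind : iIndepFun ξ P) (k : ℕ) :
    IndepFun (trajOn F π x ξ k) (ξ k) P := by
  have hpast := hind.indepFun_finset (range k) {k} (by simp) hξ
  -- `x_k` only reads `ξ 0, …, ξ (k-1)`; the other coordinates are filled arbitrarily
  let G : (range k → W) → X := fun v =>
    traj F π x (fun i => if h : i ∈ range k then v ⟨i, h⟩ else Classical.ofNonempty) k
  have hG : Measurable G := by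
    refine (measurable_traj hF hπ k).comp (measurable_pi_lambda _ fun i => ?_)
    by_cases h : i ∈ range k
    · simpa only [dif_pos h] using measurable_pi_apply _
    · simp only [dif_neg h, measurable_const]
  convert hpast.comp hG (measurable_pi_apply ⟨k, mem_singleton_self k⟩) using 1
  · funext ω
    exact traj_congr fun i hi => by simp [mem_range.mpr hi]
  · rfl

end Trajectory

section Transfer

variable {X U W Ω : Type*} [MeasurableSpace X] [MeasurableSpace U] [MeasurableSpace W]
  [MeasurableSpace Ω] {F : X → U → W → X} {π : X → U} {x : X} {P : Measure Ω}
  [IsFiniteMeasure P] {μ : Measure W} {ξ : ℕ → Ω → W} [Nonempty W]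

theorem lintegral_trajOn_succ (hF : Measurable fun p : X × U × W => F p.1 p.2.1 p.2.2)
    (hπ : Measurable π) (hξ : ∀ k, Measurable (ξ k)) (hind : iIndepFun ξ P)
    (hlaw : ∀ k, P.map (ξ k) = μ) {g : X → ℝ≥0∞} (hg : Measurable g) (k : ℕ) :
    ∫⁻ ω, g (trajOn F π x ξ (k + 1) ω) ∂P =
      ∫⁻ ω, ∫⁻ w, g (F (trajOn F π x ξ k ω) (π (trajOn F π x ξ k ω)) w) ∂μ ∂P := by
  rw [← hlaw k]
  exact (indepFun_trajOn hF hπ hξ hind k).lintegral_comp_eq_lintegral_lintegral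
    (measurable_trajOn hF hπ hξ k) (hξ k) (φ := fun y w => g (F y (π y) w))
    (hg.comp (measurable_uncurry_closedLoop hF hπ))

theorem integral_trajOn_succ (hF : Measurable fun p : X × U × W => F p.1 p.2.1 p.2.2)
    (hπ : Measurable π) (hξ : ∀ k, Measurable (ξ k)) (hind : iIndepFun ξ P)
    (hlaw : ∀ k, P.map (ξ k) = μ) {g : X → ℝ} (hg : Measurable g) {C : ℝ}
    (hgC : ∀ y, |g y| ≤ C) (k : ℕ) :
    ∫ ω, g (trajOn F π x ξ (k + 1) ω) ∂P =
      ∫ ω, ∫ w, g (F (trajOn F π x ξ k ω) (π (trajOn F π x ξ k ω)) w) ∂μ ∂P := by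
  rw [← hlaw k]
  exact (indepFun_trajOn hF hπ hξ hind k).integral_comp_eq_integral_integral
    (measurable_trajOn hF hπ hξ k) (hξ k) (φ := fun y w => g (F y (π y) w))
    (hg.comp (measurable_uncurry_closedLoop hF hπ))
    fun _ _ => hgC _

end Transfer

section HitTime

variable {X U Ω : Type*} {t : X} {Y : ℕ → Ω → X}

theorem eq_of_hitTime_le (hY : ∀ k ω, Y k ω = t → Y (k + 1) ω = t) {k : ℕ} {ω : Ω}
    (h : hitTime t Y ω ≤ k) : Y k ω = t := by
  by_contra hk
  have hbefore : ∀ j ≤ k, Y j ω ≠ t := fun j hj hYj =>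
    hk (Nat.le_induction hYj (fun n _ => hY n ω) k hj)
  have hafter : ((k + 1 : ℕ) : ℝ≥0∞) ≤ hitTime t Y ω :=
    le_iInf₂ fun j hj => by exact_mod_cast Nat.lt_of_not_le fun hjk => hbefore j hjk hj
  exact absurd (hafter.trans h) (by exact_mod_cast Nat.not_succ_le_self k)

theorem totalCost_eq_tsum_ofReal_integral [MeasurableSpace Ω] {P : Measure Ω} {f : X → U → ℝ}
    {π : X → U} (hY : ∀ k ω, Y k ω = t → Y (k + 1) ω = t) (hft : f t (π t) = 0)
    (hf0 : ∀ y, 0 ≤ f y (π y)) (hint : ∀ k, Integrable (fun ω => f (Y k ω) (π (Y k ω))) P) :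
    totalCost P t f π Y = ∑' k, ENNReal.ofReal (∫ ω, f (Y k ω) (π (Y k ω)) ∂P) := by
  calc totalCost P t f π Y = ∫⁻ ω, ∑' k, ENNReal.ofReal (f (Y k ω) (π (Y k ω))) ∂P := by
        rw [totalCost]
        congr 1 with ω
        congr 1 with k
        split_ifs with h
        · rfl
        · rw [eq_of_hitTime_le hY (not_lt.mp h), hft, ENNReal.ofReal_zero]
    _ = ∑' k, ∫⁻ ω, ENNReal.ofReal (f (Y k ω) (π (Y k ω))) ∂P :=
        lintegral_tsum fun k => (hint k).aemeasurable.ennreal_ofReal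
    _ = _ := by
        congr 1 with k
        exact (ofReal_integral_eq_lintegral_ofReal (hint k) (.of_forall fun _ => hf0 _)).symm

end HitTime

theorem rollout_step_le {X U W : Type*} [MeasurableSpace W] {μ : Measure W}
    [IsProbabilityMeasure μ] {t : X} {Ua : X → Set U} {f : X → U → ℝ} {F : X → U → W → X}
    {Vstar V : X → ℝ} {ε : ℝ} {π : X → U} {y : X} (hy : y ≠ t)
    (hfix : Vstar y = bellman μ t Ua f F Vstar y)
    (hVsint : ∀ u, Integrable (fun w => Vstar (F y u w)) μ)
    (hVint : ∀ u, Integrable (fun w => V (F y u w)) μ) (happrox : ∀ z, |V z - Vstar z| ≤ ε)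
    (hmem : π y ∈ Ua y) (hgreedy : ∀ u ∈ Ua y,
      f y (π y) + ∫ w, V (F y (π y) w) ∂μ ≤ f y u + ∫ w, V (F y u w) ∂μ) :
    f y (π y) + ∫ w, Vstar (F y (π y) w) ∂μ ≤ Vstar y + 2 * ε := by
  have hclose : ∀ u, |∫ w, V (F y u w) ∂μ - ∫ w, Vstar (F y u w) ∂μ| ≤ ε := fun u => by
    rw [← integral_sub (hVint u) (hVsint u)]
    exact abs_integral_le_of_abs_le fun w => happrox (F y u w)
  have : Nonempty (Ua y) := ⟨⟨π y, hmem⟩⟩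
  have hinf : f y (π y) + ∫ w, Vstar (F y (π y) w) ∂μ - 2 * ε
      ≤ ⨅ u : Ua y, (f y u + ∫ w, Vstar (F y u w) ∂μ) := le_ciInf fun u => by
    linarith [hgreedy u u.2, abs_le.mp (hclose u), abs_le.mp (hclose (π y))]
  rw [hfix, bellman, if_neg hy]
  linarith

section ClosedLoop

variable {X U W Ω : Type*} [MeasurableSpace X] [MeasurableSpace U] [MeasurableSpace W]
  [MeasurableSpace Ω] {F : X → U → W → X} {π : X → U} {x t : X} {P : Measure Ω}
  [IsProbabilityMeasure P] {μ : Measure W} [IsProbabilityMeasure μ] {ξ : ℕ → Ω → W}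
  [MeasurableSingletonClass X]

theorem sum_measureReal_trajOn_ne_le_of_drift
    (hF : Measurable fun p : X × U × W => F p.1 p.2.1 p.2.2) (hπ : Measurable π)
    (hξ : ∀ k, Measurable (ξ k)) (hind : iIndepFun ξ P) (hlaw : ∀ k, P.map (ξ k) = μ)
    (habs : ∀ w, F t (π t) w = t) {L : X → ℝ} (hL0 : ∀ y, 0 ≤ L y) (hL : Measurable L)
    (hLint : ∀ y, Integrable (fun w => L (F y (π y) w)) μ) {c : ℝ} (hc : 0 < c)
    (hdrift : ∀ ω k, trajOn F π x ξ k ω ≠ t →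
      ∫ w, L (F (trajOn F π x ξ k ω) (π (trajOn F π x ξ k ω)) w) ∂μ
        ≤ L (trajOn F π x ξ k ω) - c) (n : ℕ) :
    ∑ k ∈ range n, P.real (trajOn F π x ξ k ⁻¹' {t}ᶜ) ≤ L x / c := by
  have : Nonempty W := nonempty_of_isProbabilityMeasure μ
  set Y := trajOn F π x ξ
  set m : ℕ → ℝ≥0∞ := fun k => ∫⁻ ω, ENNReal.ofReal (L (Y k ω)) ∂P
  have hnt : ∀ k, MeasurableSet (Y k ⁻¹' {t}ᶜ) := fun k =>
    measurable_trajOn hF hπ hξ k (measurableSet_singleton t).compl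
  have hdrop : ∀ k ω, ∫⁻ w, ENNReal.ofReal (L (F (Y k ω) (π (Y k ω)) w)) ∂μ
      + (Y k ⁻¹' {t}ᶜ).indicator (fun _ => ENNReal.ofReal c) ω ≤ ENNReal.ofReal (L (Y k ω)) := by
    intro k ω
    by_cases hy : Y k ω = t
    · simp [hy, habs]
    · rw [Set.indicator_of_mem hy, ← ofReal_integral_eq_lintegral_ofReal (hLint _)
        (.of_forall fun _ => hL0 _), ← ENNReal.ofReal_add (integral_nonneg fun _ => hL0 _) hc.le]
      exact ENNReal.ofReal_le_ofReal (by linarith [hdrift ω k hy])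
  have hstep : ∀ k, m (k + 1) + ENNReal.ofReal c * P (Y k ⁻¹' {t}ᶜ) ≤ m k + 0 := fun k => by
    dsimp only [m]
    rw [lintegral_trajOn_succ hF hπ hξ hind hlaw hL.ennreal_ofReal, add_zero,
      ← lintegral_indicator_const (hnt k),
      ← lintegral_add_right _ (measurable_const.indicator (hnt k))]
    exact lintegral_mono (hdrop k)
  have htel := add_sum_range_le_of_succ_add_le hstep n
  simp only [sum_const_zero, add_zero, ← mul_sum] at htel
  have hm0 : m 0 = ENNReal.ofReal (L x) := by simp [m, Y, trajOn, traj]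
  have hbound := ENNReal.toReal_mono ENNReal.ofReal_ne_top ((le_add_self.trans htel).trans_eq hm0)
  rw [ENNReal.toReal_mul, ENNReal.toReal_ofReal hc.le, ENNReal.toReal_ofReal (hL0 x),
    ENNReal.toReal_sum fun k _ => measure_ne_top P _] at hbound
  rw [le_div_iff₀ hc, mul_comm]
  exact hbound

theorem integral_trajOn_succ_add_le
    (hF : Measurable fun p : X × U × W => F p.1 p.2.1 p.2.2) (hπ : Measurable π)
    (hξ : ∀ k, Measurable (ξ k)) (hind : iIndepFun ξ P) (hlaw : ∀ k, P.map (ξ k) = μ)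
    {f : X → U → ℝ} {G : X → ℝ} (hG : Measurable G) {C : ℝ} (hGC : ∀ y, |G y| ≤ C) {δ : ℝ}
    (hGstep : ∀ y, f y (π y) + ∫ w, G (F y (π y) w) ∂μ
      ≤ G y + ({t}ᶜ : Set X).indicator (fun _ => δ) y)
    {k : ℕ} (hf : Integrable (fun ω => f (trajOn F π x ξ k ω) (π (trajOn F π x ξ k ω))) P) :
    ∫ ω, G (trajOn F π x ξ (k + 1) ω) ∂P + ∫ ω, f (trajOn F π x ξ k ω) (π (trajOn F π x ξ k ω)) ∂P
      ≤ ∫ ω, G (trajOn F π x ξ k ω) ∂P + δ * P.real (trajOn F π x ξ k ⁻¹' {t}ᶜ) := by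
  have : Nonempty W := nonempty_of_isProbabilityMeasure μ
  set Y := trajOn F π x ξ
  have hY : Measurable (Y k) := measurable_trajOn hF hπ hξ k
  have hnt : MeasurableSet (Y k ⁻¹' {t}ᶜ) := hY (measurableSet_singleton t).compl
  have hGF : Measurable fun y => ∫ w, G (F y (π y) w) ∂μ :=
    (hG.comp (measurable_uncurry_closedLoop hF hπ)).stronglyMeasurable.integral_prod_right'
      |>.measurable
  have hGFint := integrable_comp_of_abs_le (P := P) hY hGF fun y =>
    abs_integral_le_of_abs_le (μ := μ) fun w => hGC (F y (π y) w)
  have hGint := integrable_comp_of_abs_le (P := P) hY hG hGC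
  have hδint : Integrable (fun ω => ({t}ᶜ : Set X).indicator (fun _ => δ) (Y k ω)) P :=
    (integrable_const δ).indicator hnt
  have hδ : ∫ ω, ({t}ᶜ : Set X).indicator (fun _ => δ) (Y k ω) ∂P
      = δ * P.real (Y k ⁻¹' {t}ᶜ) := by
    rw [show (fun ω => ({t}ᶜ : Set X).indicator (fun _ => δ) (Y k ω))
      = (Y k ⁻¹' {t}ᶜ).indicator fun _ => δ from rfl, integral_indicator_const _ hnt,
      smul_eq_mul, mul_comm]
  rw [integral_trajOn_succ hF hπ hξ hind hlaw hG hGC, ← hδ, ← integral_add hGFint hf,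
    ← integral_add hGint hδint]
  exact integral_mono (hGFint.add hf) (hGint.add hδint) fun ω => by linarith [hGstep (Y k ω)]

theorem totalCost_trajOn_toReal_le
    (hF : Measurable fun p : X × U × W => F p.1 p.2.1 p.2.2) (hπ : Measurable π)
    (hξ : ∀ k, Measurable (ξ k)) (hind : iIndepFun ξ P) (hlaw : ∀ k, P.map (ξ k) = μ)
    (habs : ∀ w, F t (π t) w = t) {f : X → U → ℝ} (hf0 : ∀ y, 0 ≤ f y (π y))
    (hf : Measurable fun y => f y (π y)) (hft : f t (π t) = 0) {G : X → ℝ} (hG : Measurable G)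
    {C : ℝ} (hGC : ∀ y, |G y| ≤ C) (hGt : G t = 0) {δ : ℝ} (hδ : 0 ≤ δ)
    (hGstep : ∀ y, f y (π y) + ∫ w, G (F y (π y) w) ∂μ
      ≤ G y + ({t}ᶜ : Set X).indicator (fun _ => δ) y)
    {M : ℝ} (hM : ∀ n, ∑ k ∈ range n, P.real (trajOn F π x ξ k ⁻¹' {t}ᶜ) ≤ M) :
    (totalCost P t f π (trajOn F π x ξ)).toReal ≤ G x + δ * M := by
  have hY : ∀ k, Measurable (trajOn F π x ξ k) := measurable_trajOn hF hπ hξ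
  have hC : 0 ≤ C := (abs_nonneg _).trans (hGC t)
  -- the one-step inequality also bounds the stage cost, which makes it integrable
  have hfC : ∀ y, |f y (π y)| ≤ 2 * C + δ := fun y => by
    have hGF := abs_integral_le_of_abs_le (μ := μ) fun w => hGC (F y (π y) w)
    have hind : ({t}ᶜ : Set X).indicator (fun _ => δ) y ≤ δ :=
      Set.indicator_le_self' (fun _ _ => hδ) y
    rw [abs_of_nonneg (hf0 y)]
    linarith [hGstep y, (abs_le.mp (hGC y)).2, (abs_le.mp hGF).1]
  have hfint : ∀ k, Integrable (fun ω => f (trajOn F π x ξ k ω) (π (trajOn F π x ξ k ω))) P :=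
    fun k => integrable_comp_of_abs_le (hY k) hf hfC
  have he : ∀ k, 0 ≤ ∫ ω, f (trajOn F π x ξ k ω) (π (trajOn F π x ξ k ω)) ∂P :=
    fun k => integral_nonneg fun ω => hf0 _
  obtain ⟨hsum, hle⟩ := summable_and_tsum_le_of_succ_add_le he (fun k => measureReal_nonneg) hδ hC
    (fun k => integral_trajOn_succ_add_le hF hπ hξ hind hlaw hG hGC hGstep (hfint k))
    (fun n => neg_mul_measureReal_le_integral_comp (P := P) (hY n) hG hGC hGt) hM
  rw [totalCost_eq_tsum_ofReal_integral (fun k ω => trajOn_succ_eq_of_eq habs) hft hf0 hfint,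
    ← ENNReal.ofReal_tsum_of_nonneg he hsum, ENNReal.toReal_ofReal (tsum_nonneg he)]
  simpa [trajOn, traj] using hle

end ClosedLoop

theorem rollout_bound_lyapunov_general
    {X U W Ω : Type*} [MeasurableSpace X] [MeasurableSingletonClass X]
    [MeasurableSpace U] [MeasurableSpace W] [MeasurableSpace Ω]
    (μ : Measure W) [IsProbabilityMeasure μ] (P : Measure Ω) [IsProbabilityMeasure P]
    (t : X) (u0 : U) (Ua : X → Set U) (F : X → U → W → X) (f : X → U → ℝ)
    -- SSP model: nonempty control sets, nonnegative measurable stage cost, measurable dynamics,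
    -- absorbing cost-free terminal state
    (hfnn : ∀ y u, 0 ≤ f y u)
    (hFmeas : Measurable fun p : X × U × W => F p.1 p.2.1 p.2.2)
    (hfmeas : Measurable fun p : X × U => f p.1 p.2)
    (hft : f t u0 = 0) (hFt : ∀ w, F t u0 w = t)
    -- V* : bounded measurable, V*(t)=0, Bellman fixed point, well-defined one-step integrals
    (Vstar : X → ℝ) (hVsmeas : Measurable Vstar) (hVsbdd : ∃ C, ∀ y, |Vstar y| ≤ C)
    (hVst : Vstar t = 0) (hVsfix : ∀ y, Vstar y = bellman μ t Ua f F Vstar y)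
    (hVsint : ∀ y u, Integrable (fun w => Vstar (F y u w)) μ)
    -- V : bounded measurable surrogate with V(t)=0 and ‖V - V*‖∞ ≤ ε
    (V : X → ℝ)
    (hVint : ∀ y u, Integrable (fun w => V (F y u w)) μ)
    (ε : ℝ) (happrox : ∀ y, |V y - Vstar y| ≤ ε)
    (πR : X → U) (hπmeas : Measurable πR)
    -- rollout (one-step greedy) policy for V, with the minimum attained
    (hπt : πR t = u0)
    (hgreedy : ∀ y, y ≠ t → πR y ∈ Ua y ∧ ∀ u ∈ Ua y,
      f y (πR y) + ∫ w, V (F y (πR y) w) ∂μ ≤ f y u + ∫ w, V (F y u w) ∂μ)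
    -- i.i.d. disturbance sequence with common law μ on an abstract probability space
    (ξ : ℕ → Ω → W) (hξmeas : ∀ k, Measurable (ξ k))
    (hξindep : iIndepFun ξ P)
    (hξlaw : ∀ k, P.map (ξ k) = μ)
    (x : X)
    (L : X → ℝ) (hL0 : ∀ y, 0 ≤ L y) (hLmeas : Measurable L)
    (hLint : ∀ y u, Integrable (fun w => L (F y u w)) μ)
    (c : ℝ) (hc : 0 < c)
    (hdrift : ∀ ω k, trajOn F πR x ξ k ω ≠ t →
      ∫ w, L (F (trajOn F πR x ξ k ω) (πR (trajOn F πR x ξ k ω)) w) ∂μ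
        ≤ L (trajOn F πR x ξ k ω) - c) :
    (totalCost P t f πR (trajOn F πR x ξ)).toReal - Vstar x ≤ 2 * ε / c * L x := by
  have habs : ∀ w, F t (πR t) w = t := fun w => hπt ▸ hFt w
  have hft' : f t (πR t) = 0 := hπt ▸ hft
  obtain ⟨C, hC⟩ := hVsbdd
  have hstep : ∀ y, f y (πR y) + ∫ w, Vstar (F y (πR y) w) ∂μ
      ≤ Vstar y + ({t}ᶜ : Set X).indicator (fun _ => 2 * ε) y := by
    intro y
    by_cases hy : y = t
    · simp [hy, hft', habs, hVst]
    · rw [Set.indicator_of_mem hy]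
      exact rollout_step_le hy (hVsfix y) (hVsint y) (hVint y) happrox (hgreedy y hy).1
        (hgreedy y hy).2
  have hvisits := sum_measureReal_trajOn_ne_le_of_drift hFmeas hπmeas hξmeas hξindep hξlaw habs
    hL0 hLmeas (fun y => hLint y _) hc hdrift
  have hcost := totalCost_trajOn_toReal_le hFmeas hπmeas hξmeas hξindep hξlaw habs
    (fun y => hfnn y _) (hfmeas.comp (measurable_id.prodMk hπmeas)) hft' hVsmeas hC hVst
    (by linarith [(abs_nonneg _).trans (happrox t)]) hstep hvisits
  calc _ ≤ 2 * ε * (L x / c) := by linarith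
    _ = 2 * ε / c * L x := by ring

/-- Rollout bound under a Lyapunov drift condition: under the hypotheses of the rollout
performance bound, if in addition `E[L(F(x', π_R(x'), w))] ≤ L(x') - c` at every nonterminal
state visited by the closed loop (with `L ≥ 0`, `c > 0`), then
`J^{π_R}(x) - V*(x) ≤ (2ε/c) · L(x)`. -/
theorem rollout_bound_lyapunov
    {X U W Ω : Type*} [MeasurableSpace X] [MeasurableSingletonClass X]
    [MeasurableSpace U] [MeasurableSpace W] [MeasurableSpace Ω]
    (μ : Measure W) [IsProbabilityMeasure μ] (P : Measure Ω) [IsProbabilityMeasure P]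
    (t : X) (u0 : U) (Ua : X → Set U) (F : X → U → W → X) (f : X → U → ℝ)
    -- SSP model: nonempty control sets, nonnegative measurable stage cost, measurable dynamics,
    -- absorbing cost-free terminal state
    (hUne : ∀ y, (Ua y).Nonempty) (hfnn : ∀ y u, 0 ≤ f y u)
    (hFmeas : Measurable fun p : X × U × W => F p.1 p.2.1 p.2.2)
    (hfmeas : Measurable fun p : X × U => f p.1 p.2)
    (hUt : Ua t = {u0}) (hft : f t u0 = 0) (hFt : ∀ w, F t u0 w = t)
    -- V* : bounded measurable, V*(t)=0, Bellman fixed point, well-defined one-step integrals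
    (Vstar : X → ℝ) (hVsmeas : Measurable Vstar) (hVsbdd : ∃ C, ∀ y, |Vstar y| ≤ C)
    (hVst : Vstar t = 0) (hVsfix : ∀ y, Vstar y = bellman μ t Ua f F Vstar y)
    (hVsint : ∀ y u, Integrable (fun w => Vstar (F y u w)) μ)
    -- V : bounded measurable surrogate with V(t)=0 and ‖V - V*‖∞ ≤ ε
    (V : X → ℝ) (hVmeas : Measurable V) (hVbdd : ∃ C, ∀ y, |V y| ≤ C) (hVt : V t = 0)
    (hVint : ∀ y u, Integrable (fun w => V (F y u w)) μ)
    (ε : ℝ) (hε : 0 ≤ ε) (happrox : ∀ y, |V y - Vstar y| ≤ ε)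
    (πR : X → U) (hπmeas : Measurable πR)
    -- rollout (one-step greedy) policy for V, with the minimum attained
    (hπt : πR t = u0)
    (hgreedy : ∀ y, y ≠ t → πR y ∈ Ua y ∧ ∀ u ∈ Ua y,
      f y (πR y) + ∫ w, V (F y (πR y) w) ∂μ ≤ f y u + ∫ w, V (F y u w) ∂μ)
    -- i.i.d. disturbance sequence with common law μ on an abstract probability space
    (ξ : ℕ → Ω → W) (hξmeas : ∀ k, Measurable (ξ k))
    (hξindep : iIndepFun ξ P)
    (hξlaw : ∀ k, P.map (ξ k) = μ)
    -- properness of the closed loop from x: τ < ∞ a.s. and J(x) < ∞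
    (x : X)
    (hproper_tau : ∀ᵐ ω ∂P, hitTime t (trajOn F πR x ξ) ω < ⊤)
    (hproper_J : totalCost P t f πR (trajOn F πR x ξ) < ⊤)
    (L : X → ℝ) (hL0 : ∀ y, 0 ≤ L y) (hLmeas : Measurable L)
    (hLint : ∀ y u, Integrable (fun w => L (F y u w)) μ)
    (c : ℝ) (hc : 0 < c)
    (hdrift : ∀ ω k, trajOn F πR x ξ k ω ≠ t →
      ∫ w, L (F (trajOn F πR x ξ k ω) (πR (trajOn F πR x ξ k ω)) w) ∂μ
        ≤ L (trajOn F πR x ξ k ω) - c) :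
    (totalCost P t f πR (trajOn F πR x ξ)).toReal - Vstar x ≤ 2 * ε / c * L x :=
  rollout_bound_lyapunov_general μ P t u0 Ua F f hfnn hFmeas hfmeas hft hFt Vstar hVsmeas hVsbdd
    hVst hVsfix hVsint V hVint ε happrox πR hπmeas hπt hgreedy ξ hξmeas hξindep hξlaw x L hL0 hLmeas
    hLint c hc hdrift
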